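/- arXiv:1003.0981 — 3 statements merged into one kernel-verified Lean document; each statement's English description precedes it below -/
import Mathlib

section
/- For $0 \le k \le n$, the convolved Fibonacci number satisfies $f^{(k+1)}_{n-k+1} = \sum_{i=0}^{\lfloor (n-k)/2 \rfloor} \binom{n-i}{i} \binom{n-2i}{k}$, where $f^{(k+1)}_{n-k+1} = \sum_{j_1 + \cdots + j_{k+1} = n-k,\ j_t \ge 0} f_{j_1+1} \cdots f_{j_{k+1}+1}$. -/
/-! With `y = X + X²`, the series `F = ∑ f_{j+1} Xʲ` satisfies `F (1 - y) = 1`, so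
`F^(k+1) = (1 - y)^-(k+1) = ∑ₘ C(k+m, k) yᵐ`. As `yᵐ = Xᵐ (1 + X)ᵐ`, the coefficient of `X^M`
is `∑ₘ C(k+m, k) C(m, M-m)`; substituting `m = M - i` and exchanging the two binomial factors
gives the sum over `i`. -/

open PowerSeries Finset

theorem Nat.choose_mul_choose_sub_comm (n k i : ℕ) :
    n.choose k * (n - k).choose i = n.choose i * (n - i).choose k := by
  have hk := Nat.choose_mul (n := n) (Nat.le_add_right k i)
  have hi := Nat.choose_mul (n := n) (Nat.le_add_left i k)
  rw [Nat.add_sub_cancel_left] at hk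
  rw [Nat.add_sub_cancel] at hi
  rw [← hk, ← hi, Nat.choose_symm_add]

namespace PowerSeries

variable {R : Type*}

theorem coeff_pow_eq_sum_antidiagonalTuple [CommSemiring R] (f : R⟦X⟧) (k n : ℕ) :
    coeff n (f ^ k) = ∑ j ∈ Finset.Nat.antidiagonalTuple k n, ∏ i, coeff (j i) f := by
  rw [← Fin.prod_const, coeff_prod, ← piAntidiag_univ_fin_eq_antidiagonalTuple, finsuppAntidiag,
    sum_map, ← sum_attach (piAntidiag univ n)]
  -- `finsuppAntidiag` is the image of `piAntidiag`, with the same underlying functions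
  rfl

variable (R) in
def fibSeries [Semiring R] : R⟦X⟧ :=
  mk fun n => (Nat.fib (n + 1) : R)

theorem fibSeries_mul_one_sub [CommRing R] : fibSeries R * (1 - (X + X ^ 2)) = 1 := by
  ext n
  rcases n with _ | _ | n
  · simp [fibSeries]
  · simp [fibSeries, mul_sub, mul_add, sq, ← mul_assoc, coeff_succ_mul_X]
  · simp [fibSeries, mul_sub, mul_add, sq, ← mul_assoc, coeff_succ_mul_X, Nat.fib_add_two]
    ring

theorem hasSubst_X_add_X_sq [CommRing R] : HasSubst (X + X ^ 2 : R⟦X⟧) :=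
  HasSubst.of_constantCoeff_zero' (by simp)

theorem coeff_X_add_X_sq_pow [CommSemiring R] (m n : ℕ) :
    coeff n ((X + X ^ 2 : R⟦X⟧) ^ m) = if m ≤ n then (m.choose (n - m) : R) else 0 := by
  have h : (X + X ^ 2 : R⟦X⟧) ^ m = X ^ m * (((1 + Polynomial.X) ^ m : Polynomial R) : R⟦X⟧) := by
    rw [Polynomial.coe_pow, Polynomial.coe_add, Polynomial.coe_one, Polynomial.coe_X, ← mul_pow]
    ring
  rw [h, coeff_X_pow_mul', Polynomial.coeff_coe, Polynomial.coeff_one_add_X_pow]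

theorem coeff_subst_X_add_X_sq [CommRing R] (f : R⟦X⟧) (n : ℕ) :
    coeff n (f.subst (X + X ^ 2 : R⟦X⟧)) = ∑ m ∈ range (n + 1), coeff m f * m.choose (n - m) := by
  rw [coeff_subst' hasSubst_X_add_X_sq, finsum_eq_sum_of_support_subset (s := range (n + 1))]
  · refine sum_congr rfl fun m hm => ?_
    rw [coeff_X_add_X_sq_pow, if_pos (by simpa [Nat.lt_succ_iff] using hm), smul_eq_mul]
  · intro m hm
    by_contra hmn
    simp_all [coeff_X_add_X_sq_pow]

theorem fibSeries_pow_eq_subst [CommRing R] (k : ℕ) :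
    fibSeries R ^ (k + 1) = (mk fun n => (Nat.choose (k + n) k : R)).subst (X + X ^ 2 : R⟦X⟧) := by
  have hsubst := congr_arg (substAlgHom (hasSubst_X_add_X_sq (R := R)))
    (mk_add_choose_mul_one_sub_pow_eq_one (S := R) (d := k))
  rw [map_mul, map_pow, map_sub, map_one, substAlgHom_X, coe_substAlgHom] at hsubst
  have hfib : fibSeries R ^ (k + 1) * (1 - (X + X ^ 2)) ^ (k + 1) = 1 := by
    rw [← mul_pow, fibSeries_mul_one_sub, one_pow]
  exact left_inv_eq_right_inv hfib (by rw [mul_comm, hsubst])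

end PowerSeries

theorem Nat.sum_add_choose_mul_choose_sub (k M : ℕ) :
    ∑ m ∈ range (M + 1), (k + m).choose k * m.choose (M - m) =
      ∑ i ∈ range (M / 2 + 1), (M + k - i).choose i * (M + k - 2 * i).choose k := by
  rw [← sum_range_reflect, ← sum_subset (range_subset_range.mpr (by omega : M / 2 + 1 ≤ M + 1))]
  · refine sum_congr rfl fun i hi => ?_
    have h2i : 2 * i ≤ M := by rw [mem_range] at hi; omega
    have h := Nat.choose_mul_choose_sub_comm (k + (M - i)) k i
    rw [Nat.add_sub_cancel_left] at h
    rw [show M + 1 - 1 - i = M - i by omega, show M - (M - i) = i by omega, h]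
    congr 2 <;> omega
  · intro i hi hni
    rw [mem_range] at hi hni
    rw [Nat.choose_eq_zero_of_lt (by omega : M + 1 - 1 - i < M - (M + 1 - 1 - i)), mul_zero]

/-- Explicit binomial formula for the convolved Fibonacci numbers:
`f^{(k+1)}_{n-k+1} = ∑_{i=0}^{⌊(n-k)/2⌋} C(n-i, i) C(n-2i, k)`. -/
theorem convolved_fib_eq_binomial_sum (n k : ℕ) (hk : k ≤ n) :
    (∑ j ∈ Finset.Nat.antidiagonalTuple (k + 1) (n - k),
        ∏ t : Fin (k + 1), Nat.fib (j t + 1)) =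
      ∑ i ∈ Finset.range ((n - k) / 2 + 1),
        Nat.choose (n - i) i * Nat.choose (n - 2 * i) k := by
  obtain ⟨M, rfl⟩ : ∃ M, n = M + k := ⟨n - k, by omega⟩
  have h := congr_arg (coeff M) (fibSeries_pow_eq_subst (R := ℤ) k)
  rw [coeff_pow_eq_sum_antidiagonalTuple, coeff_subst_X_add_X_sq] at h
  simp only [fibSeries, coeff_mk] at h
  rw [Nat.add_sub_cancel, ← Nat.sum_add_choose_mul_choose_sub]
  exact_mod_cast h
end

section
/- Let $G_n$ be the $n \times n$ matrix with $0$ on the diagonal, $1$ above the diagonal, $-1$ on the subdiagonal, and $0$ below the subdiagonal. The determinants satisfy the recurrence $\det G_{n+1} = \det G_0 + \det G_1 + \cdots + \det G_{n-1}$, where $\det G_0 = 1$. -/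
/-!
Expanding `det G_{n+2}` along its first column, whose only nonzero entry is the `-1` in row `1`,
leaves the minor obtained from `G_{n+1}` by replacing its first row `(0, 1, …, 1)` with
`(1, 1, …, 1)`. Splitting that row as the old row plus `e_0` gives
`det G_{n+2} = det G_{n+1} + det G_n`, and since `det G_1 = 0` this recurrence telescopes into the
stated sum.
-/

open Matrix

namespace Matrix

variable {R : Type*} [CommRing R] {n : ℕ}

theorem det_succ_column_zero_of_forall_ne_eq_zero (A : Matrix (Fin (n + 1)) (Fin (n + 1)) R)
    (k : Fin (n + 1)) (hA : ∀ i, i ≠ k → A i 0 = 0) :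
    det A = (-1) ^ (k : ℕ) * A k 0 * det (A.submatrix k.succAbove Fin.succ) := by
  rw [det_succ_column_zero, Finset.sum_eq_single k (fun i _ hi => by simp [hA i hi])
    (by simp)]

theorem det_updateRow_zero_pi_single_zero (A : Matrix (Fin (n + 1)) (Fin (n + 1)) R) :
    det (A.updateRow 0 (Pi.single 0 1)) = det (A.submatrix Fin.succ Fin.succ) := by
  rw [det_succ_row_zero, Finset.sum_eq_single 0 (fun j _ hj => by simp [hj]) (by simp)]
  have hminor : (A.updateRow 0 (Pi.single 0 1)).submatrix Fin.succ Fin.succ =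
      A.submatrix Fin.succ Fin.succ := by
    ext i j
    simp
  simp [Fin.succAbove_zero, hminor]

end Matrix

def hessenberg (R : Type*) [Ring R] (m : ℕ) : Matrix (Fin m) (Fin m) R :=
  Matrix.of fun i j => if (i : ℕ) = (j : ℕ) + 1 then -1 else if (i : ℕ) < (j : ℕ) then 1 else 0

namespace hessenberg

section Ring

variable {R : Type*} [Ring R] {n : ℕ}

theorem submatrix_succ_succ :
    (hessenberg R (n + 1)).submatrix Fin.succ Fin.succ = hessenberg R n := by
  ext i j
  simp [hessenberg]

theorem apply_zero_of_ne_one (i : Fin (n + 2)) (hi : i ≠ 1) : hessenberg R (n + 2) i 0 = 0 := by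
  have : (i : ℕ) ≠ 1 := fun h => hi (Fin.ext (by simpa using h))
  simp [hessenberg, this]

theorem submatrix_succAbove_one_succ :
    (hessenberg R (n + 2)).submatrix (Fin.succAbove 1) Fin.succ =
      (hessenberg R (n + 1)).updateRow 0 (hessenberg R (n + 1) 0 + Pi.single 0 1) := by
  ext i j
  rw [← Fin.succ_zero_eq_one]
  cases i using Fin.cases with
  | zero =>
    cases j using Fin.cases with
    | zero => simp [hessenberg]
    | succ j => simp [hessenberg, Fin.succ_ne_zero]
  | succ i =>
    rw [submatrix_apply, Fin.succ_succAbove_succ, Fin.succAbove_zero,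
      updateRow_ne (Fin.succ_ne_zero i)]
    simp [hessenberg]

end Ring

variable {R : Type*} [CommRing R] {n : ℕ}

theorem det_add_two :
    det (hessenberg R (n + 2)) = det (hessenberg R (n + 1)) + det (hessenberg R n) := by
  rw [det_succ_column_zero_of_forall_ne_eq_zero _ 1 apply_zero_of_ne_one,
    submatrix_succAbove_one_succ, det_updateRow_add, updateRow_eq_self,
    det_updateRow_zero_pi_single_zero, submatrix_succ_succ]
  simp [hessenberg]

theorem det_succ_eq_sum (n : ℕ) :
    det (hessenberg R (n + 1)) = ∑ m ∈ Finset.range n, det (hessenberg R m) := by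
  induction n with
  | zero => simp [hessenberg]
  | succ n ih => rw [Finset.sum_range_succ, ← ih, det_add_two]

end hessenberg

/-- For the Hessenberg matrices `G_m` (zero diagonal, `1` above the diagonal,
`-1` on the subdiagonal), `det G_{n+1} = det G_0 + det G_1 + ⋯ + det G_{n-1}`
(with `det G_0 = 1`, the determinant of the empty matrix). -/
theorem det_hessenberg_recurrence
    (G : (m : ℕ) → Matrix (Fin m) (Fin m) ℤ)
    (hG : ∀ (m : ℕ) (i j : Fin m), G m i j =
      if (i : ℕ) = (j : ℕ) + 1 then -1
      else if (i : ℕ) < (j : ℕ) then 1 else 0)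
    (n : ℕ) :
    (G (n + 1)).det = ∑ m ∈ Finset.range n, (G m).det := by
  have hG' : G = hessenberg ℤ := funext fun m => Matrix.ext (hG m)
  rw [hG']
  exact hessenberg.det_succ_eq_sum n
end

section
/- Let $G_n$ be the $n \times n$ matrix with $0$ on the diagonal, $1$ above the diagonal, $-1$ on the subdiagonal, and $0$ below. For $0 \le k \le n$, the sum $S_{n-k}$ of all principal minors of order $n-k$ of $G_n$ equals $\sum_{j_1 + j_2 + \cdots + j_{k+1} = n-2k-1} f_{j_1} f_{j_2} \cdots f_{j_{k+1}}$, where each $j_t \ge -1$. -/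
/-!
A principal submatrix of `G` on an index set `S` is block upper triangular, with one diagonal
block for each maximal run of consecutive indices in `S`, because `G` vanishes strictly below
its subdiagonal; as `G` is also Toeplitz, a run of length `L` contributes `det G_L = f (L - 1)`.
An `(n - k)`-subset of `{0, …, n - 1}` is the same as the lengths `m_0, …, m_k` of the `k + 1`
runs separated by the `k` missing indices; instead of this bijection we split a subset at its
least missing element (`mex`), which gives the same recursion in `k` for both sides. The values
`det G_L` follow by expanding along the first column, jointly with those of `G_L` with its first
row replaced by ones.
-/

open Finset Matrix

namespace Matrix

variable {ι κ R : Type*} [DecidableEq ι] [DecidableEq κ] [CommRing R]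

def principalMinor (M : Matrix ι ι R) (S : Finset ι) : R :=
  (M.submatrix ((↑) : S → ι) (↑)).det

theorem principalMinor_map (M : Matrix κ κ R) (e : ι ↪ κ) (S : Finset ι) :
    M.principalMinor (S.map e) = (M.submatrix e e).principalMinor S := by
  rw [principalMinor, ← det_submatrix_equiv_self (S.equivMap e)]
  rfl

theorem principalMinor_univ [Fintype ι] (M : Matrix ι ι R) :
    M.principalMinor univ = M.det := by
  rw [principalMinor, ← det_submatrix_equiv_self (Equiv.subtypeUnivEquiv mem_univ).symm]
  rfl

theorem principalMinor_union (M : Matrix ι ι R) {A B : Finset ι} (hAB : Disjoint A B)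
    (h : ∀ i ∈ B, ∀ j ∈ A, M i j = 0) :
    M.principalMinor (A ∪ B) = M.principalMinor A * M.principalMinor B := by
  rw [principalMinor, principalMinor, principalMinor,
    ← det_fromBlocks_zero₂₁ _ (M.submatrix (↑) ((↑) : B → ι)),
    ← det_submatrix_equiv_self (Equiv.Finset.union A B hAB)]
  congr 1
  ext (i | i) (j | j)
  · rfl
  · rfl
  · exact h i i.2 j j.2
  · rfl

end Matrix

theorem Finset.Nat.sum_antidiagonalTuple_succ {M : Type*} [AddCommMonoid M] (k n : ℕ)
    (g : (Fin (k + 1) → ℕ) → M) :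
    ∑ m ∈ antidiagonalTuple (k + 1) n, g m =
      ∑ p ∈ antidiagonal n, ∑ m ∈ antidiagonalTuple k p.2, g (Fin.cons p.1 m) := by
  rw [sum_sigma']
  refine sum_bij' (fun m _ => ⟨(m 0, n - m 0), Fin.tail m⟩) (fun x _ => Fin.cons x.1.1 x.2)
    ?_ ?_ ?_ ?_ ?_
  · intro m hm
    simp only [mem_antidiagonalTuple, Fin.sum_univ_succ] at hm
    simp only [mem_sigma, HasAntidiagonal.mem_antidiagonal, mem_antidiagonalTuple, Fin.tail]
    omega
  · rintro ⟨⟨a, b⟩, m⟩ h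
    simp only [mem_sigma, HasAntidiagonal.mem_antidiagonal, mem_antidiagonalTuple] at h
    simp [mem_antidiagonalTuple, Fin.sum_univ_succ, h]
  · intro m _
    simp
  · rintro ⟨⟨a, b⟩, m⟩ h
    simp only [mem_sigma, HasAntidiagonal.mem_antidiagonal, mem_antidiagonalTuple] at h
    simp only [Fin.cons_zero, Fin.tail_cons, Sigma.mk.injEq, Prod.mk.injEq, true_and, heq_eq_eq,
      and_true]
    omega
  · intro m _
    simp

namespace Finset

def mex (S : Finset ℕ) : ℕ := Nat.find (Infinite.exists_notMem_finset S)

theorem mex_notMem (S : Finset ℕ) : S.mex ∉ S := Nat.find_spec (Infinite.exists_notMem_finset S)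

theorem range_mex_subset (S : Finset ℕ) : range S.mex ⊆ S := fun _ h =>
  not_not.mp (Nat.find_min _ (mem_range.mp h))

theorem disjoint_range_map_addRightEmbedding (a : ℕ) (T : Finset ℕ) :
    Disjoint (range a) (T.map (addRightEmbedding (a + 1))) := by
  rw [disjoint_left]
  intro x hx
  simp only [mem_range, mem_map, addRightEmbedding_apply] at hx ⊢
  omega

theorem mex_range_union_map (a : ℕ) (T : Finset ℕ) :
    (range a ∪ T.map (addRightEmbedding (a + 1))).mex = a := by
  rw [mex, Nat.find_eq_iff]
  simp only [mem_union, mem_range, mem_map, addRightEmbedding_apply, not_or, not_exists, not_and]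
  exact ⟨⟨lt_irrefl a, fun _ _ => by omega⟩, fun n hn h => absurd hn h⟩

theorem image_filter_range_union_map (a : ℕ) (T : Finset ℕ) :
    ((range a ∪ T.map (addRightEmbedding (a + 1))).filter (a < ·)).image (· - (a + 1)) = T := by
  ext x
  simp only [mem_image, mem_filter, mem_union, mem_range, mem_map, addRightEmbedding_apply]
  constructor
  · rintro ⟨y, ⟨hy | ⟨t, ht, rfl⟩, hay⟩, rfl⟩
    · omega
    · simpa using ht
  · intro hx
    exact ⟨x + (a + 1), ⟨Or.inr ⟨x, hx, rfl⟩, by omega⟩, by omega⟩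

theorem range_mex_union_map_image_filter (S : Finset ℕ) :
    range S.mex ∪ ((S.filter (S.mex < ·)).image (· - (S.mex + 1))).map
      (addRightEmbedding (S.mex + 1)) = S := by
  ext x
  simp only [mem_union, mem_range, mem_map, mem_image, mem_filter, addRightEmbedding_apply]
  constructor
  · rintro (hx | ⟨_, ⟨y, ⟨hy, hay⟩, rfl⟩, rfl⟩)
    · exact range_mex_subset S (mem_range.mpr hx)
    · rwa [Nat.sub_add_cancel hay]
  · intro hx
    rcases lt_trichotomy x S.mex with h | h | h
    · exact Or.inl h
    · exact absurd (h ▸ hx) (mex_notMem S)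
    · exact Or.inr ⟨_, ⟨x, ⟨hx, h⟩, rfl⟩, Nat.sub_add_cancel h⟩

theorem sum_powersetCard_range_eq_sum_mex {M : Type*} [AddCommMonoid M] (r k : ℕ)
    (F : Finset ℕ → M) :
    ∑ S ∈ powersetCard r (range (r + (k + 1))), F S =
      ∑ p ∈ antidiagonal r, ∑ T ∈ powersetCard p.2 (range (p.2 + k)),
        F (range p.1 ∪ T.map (addRightEmbedding (p.1 + 1))) := by
  rw [sum_sigma']
  refine (sum_bij' (fun x _ => range x.1.1 ∪ x.2.map (addRightEmbedding (x.1.1 + 1)))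
    (fun S _ => ⟨(S.mex, r - S.mex), (S.filter (S.mex < ·)).image (· - (S.mex + 1))⟩)
    ?_ ?_ ?_ ?_ ?_).symm
  · rintro ⟨⟨a, b⟩, T⟩ h
    simp only [mem_sigma, HasAntidiagonal.mem_antidiagonal, mem_powersetCard] at h
    obtain ⟨rfl, hT, rfl⟩ := h
    show range a ∪ _ ∈ _
    rw [mem_powersetCard, card_union_of_disjoint (disjoint_range_map_addRightEmbedding a T),
      card_range, card_map]
    refine ⟨union_subset (range_subset_range.mpr (by omega)) ?_, rfl⟩
    intro x hx
    simp only [mem_map, addRightEmbedding_apply] at hx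
    obtain ⟨t, ht, rfl⟩ := hx
    have := mem_range.mp (hT ht)
    simp only [mem_range]
    omega
  · intro S hS
    rw [mem_powersetCard] at hS
    set T := (S.filter (S.mex < ·)).image (· - (S.mex + 1))
    have hcard : S.mex + T.card = r := by
      have := congrArg card (range_mex_union_map_image_filter S)
      rwa [card_union_of_disjoint (disjoint_range_map_addRightEmbedding _ _), card_range,
        card_map, hS.2] at this
    simp only [mem_sigma, HasAntidiagonal.mem_antidiagonal, mem_powersetCard]
    refine ⟨by omega, fun y hy => ?_, by omega⟩
    simp only [T, mem_image, mem_filter] at hy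
    obtain ⟨x, ⟨hx, hmex⟩, rfl⟩ := hy
    have := mem_range.mp (hS.1 hx)
    rw [mem_range]
    omega
  · rintro ⟨⟨a, b⟩, T⟩ h
    simp only [mem_sigma, HasAntidiagonal.mem_antidiagonal] at h
    simp only [mex_range_union_map, image_filter_range_union_map, ← h.1, Nat.add_sub_cancel_left]
  · intro S _
    exact range_mex_union_map_image_filter S
  · intros
    rfl

end Finset

section ToeplitzHessenberg

variable {R : Type*} [CommRing R] {M : Matrix ℕ ℕ R}

theorem Matrix.principalMinor_map_addRightEmbedding (hshift : ∀ i j, M (i + 1) (j + 1) = M i j)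
    (c : ℕ) (S : Finset ℕ) :
    M.principalMinor (S.map (addRightEmbedding c)) = M.principalMinor S := by
  have hM : M.submatrix (addRightEmbedding c) (addRightEmbedding c) = M := by
    ext i j
    induction c with
    | zero => rfl
    | succ c ih => simpa only [submatrix_apply, addRightEmbedding_apply, ← add_assoc, hshift] using ih
  rw [principalMinor_map, hM]

theorem Matrix.principalMinor_range_union_map (hshift : ∀ i j, M (i + 1) (j + 1) = M i j)
    (hhess : ∀ i j, j + 1 < i → M i j = 0) (a : ℕ) (T : Finset ℕ) :
    M.principalMinor (range a ∪ T.map (addRightEmbedding (a + 1))) =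
      M.principalMinor (range a) * M.principalMinor T := by
  rw [principalMinor_union _ (disjoint_range_map_addRightEmbedding a T),
    principalMinor_map_addRightEmbedding hshift]
  intro i hi j hj
  simp only [mem_map, addRightEmbedding_apply] at hi
  obtain ⟨t, -, rfl⟩ := hi
  exact hhess _ _ (by have := mem_range.mp hj; omega)

theorem Matrix.sum_principalMinor_powersetCard_range (hshift : ∀ i j, M (i + 1) (j + 1) = M i j)
    (hhess : ∀ i j, j + 1 < i → M i j = 0) (r k : ℕ) :
    ∑ S ∈ powersetCard r (range (r + k)), M.principalMinor S =
      ∑ m ∈ Nat.antidiagonalTuple (k + 1) r, ∏ t, M.principalMinor (range (m t)) := by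
  induction k generalizing r with
  | zero =>
    have hself : powersetCard r (range r) = {range r} := by
      simpa using powersetCard_self (range r)
    simp [hself]
  | succ k ih =>
    simp only [sum_powersetCard_range_eq_sum_mex, principalMinor_range_union_map hshift hhess,
      ← mul_sum, ih, Nat.sum_antidiagonalTuple_succ, Fin.prod_univ_succ, Fin.cons_zero,
      Fin.cons_succ]

end ToeplitzHessenberg

def fibHessenberg : Matrix ℕ ℕ ℤ :=
  of fun i j => if i = j + 1 then -1 else if i < j then 1 else 0

theorem fibHessenberg_add_one_add_one (i j : ℕ) :
    fibHessenberg (i + 1) (j + 1) = fibHessenberg i j := by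
  simp [fibHessenberg]

theorem fibHessenberg_eq_zero_of_add_one_lt {i j : ℕ} (h : j + 1 < i) : fibHessenberg i j = 0 := by
  simp only [fibHessenberg, of_apply]
  split_ifs <;> omega

section Determinant

local notation "𝐆" n:max => (fibHessenberg.submatrix Fin.val Fin.val : Matrix (Fin n) (Fin n) ℤ)

theorem det_fibHessenberg_succ_succ (n : ℕ) :
    (𝐆 (n + 2)).det = (updateRow (𝐆 (n + 1)) 0 1).det := by
  have hminor : (𝐆 (n + 2)).submatrix (Fin.succAbove 1) Fin.succ = updateRow (𝐆 (n + 1)) 0 1 := by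
    ext i j
    cases i using Fin.cases <;> simp [updateRow_apply, Fin.succAbove, fibHessenberg]
  rw [det_succ_column_zero, Fin.sum_univ_succ, Fin.sum_univ_succ, Fin.succ_zero_eq_one, hminor]
  simp [fibHessenberg]

theorem det_updateRow_fibHessenberg_succ_succ (n : ℕ) :
    (updateRow (𝐆 (n + 2)) 0 1).det = (𝐆 (n + 1)).det + (updateRow (𝐆 (n + 1)) 0 1).det := by
  have hminor₀ : (updateRow (𝐆 (n + 2)) 0 1).submatrix Fin.succ Fin.succ = 𝐆 (n + 1) := by
    ext i j
    simp [updateRow_apply, fibHessenberg]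
  have hminor₁ : (updateRow (𝐆 (n + 2)) 0 1).submatrix (Fin.succAbove 1) Fin.succ =
      updateRow (𝐆 (n + 1)) 0 1 := by
    ext i j
    cases i using Fin.cases <;> simp [updateRow_apply, Fin.succAbove, fibHessenberg]
  rw [det_succ_column_zero, Fin.sum_univ_succ, Fin.sum_univ_succ, Fin.succAbove_zero,
    Fin.succ_zero_eq_one, hminor₀, hminor₁]
  simp [fibHessenberg]

theorem principalMinor_fibHessenberg_range (f : ℤ → ℤ) (hf1 : f (-1) = 1) (hf0 : f 0 = 0)
    (hf : ∀ m : ℤ, f (m + 1) = f m + f (m - 1)) (n : ℕ) :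
    fibHessenberg.principalMinor (range n) = f (n - 1) := by
  have hdet : ∀ n : ℕ, (𝐆 (n + 1)).det = f n ∧ (updateRow (𝐆 (n + 1)) 0 1).det = f (n + 1) := by
    intro n
    induction n with
    | zero =>
      have hf1' : f 1 = 1 := by simpa [hf0, hf1] using hf 0
      simp [det_unique, fibHessenberg, hf0, hf1']
    | succ n ih =>
      push_cast
      rw [det_fibHessenberg_succ_succ, det_updateRow_fibHessenberg_succ_succ, ih.1, ih.2,
        hf (n + 1)]
      simp [add_comm]
  rw [← Nat.Iio_eq_range, ← Fin.map_valEmbedding_univ, principalMinor_map, principalMinor_univ]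
  rcases n with _ | n
  · simp [hf1]
  · simpa using (hdet n).1

end Determinant

/-- The sum of all principal minors of order `n - k` of the Hessenberg matrix
`G_n` equals `∑_{j_1 + ⋯ + j_{k+1} = n - 2k - 1, j_t ≥ -1} f_{j_1} ⋯ f_{j_{k+1}}`,
where `f` is the Fibonacci sequence extended by `f_{-1} = 1`.  The sum over the
integer tuples `(j_t)` with `j_t ≥ -1` is written via the shift `j_t = m_t - 1`
with nonnegative `m_t` summing to `n - k`. -/
theorem sum_principal_minors_hessenberg_fib (n k : ℕ) (hk : k ≤ n)
    (f : ℤ → ℤ) (hf1 : f (-1) = 1) (hf0 : f 0 = 0)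
    (hf : ∀ m : ℤ, f (m + 1) = f m + f (m - 1))
    (G : Matrix (Fin n) (Fin n) ℤ)
    (hG : ∀ i j : Fin n, G i j =
      if (i : ℕ) = (j : ℕ) + 1 then -1
      else if (i : ℕ) < (j : ℕ) then 1 else 0) :
    ∑ t ∈ Finset.powersetCard (n - k) (Finset.univ : Finset (Fin n)),
        (G.submatrix (fun x : t => (x : Fin n)) (fun x : t => (x : Fin n))).det =
      ∑ m ∈ Finset.Nat.antidiagonalTuple (k + 1) (n - k),
        ∏ s : Fin (k + 1), f ((m s : ℤ) - 1) := by
  obtain ⟨r, rfl⟩ := Nat.exists_eq_add_of_le' hk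
  have hG' : G = fibHessenberg.submatrix Fin.valEmbedding Fin.valEmbedding := by
    ext i j
    exact hG i j
  rw [Nat.add_sub_cancel]
  calc ∑ t ∈ powersetCard r univ, G.principalMinor t
      = ∑ S ∈ powersetCard r (range (r + k)), fibHessenberg.principalMinor S := by
        rw [← Nat.Iio_eq_range, ← Fin.map_valEmbedding_univ, powersetCard_map, sum_map, hG']
        simp only [RelEmbedding.coe_toEmbedding, mapEmbedding_apply, principalMinor_map]
    _ = _ := by
        rw [sum_principalMinor_powersetCard_range fibHessenberg_add_one_add_one
          fun _ _ => fibHessenberg_eq_zero_of_add_one_lt]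
        simp only [principalMinor_fibHessenberg_range f hf1 hf0 hf]
end
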